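/- Let d ≥ 1, k > 0, χ > 0, and d/(d+k) < m < 1. Then the free energy F_χ is bounded below: there exists a constant C ∈ ℝ such that F_χ[ρ] ≥ C for every bounded probability density ρ on ℝ^d with ∫_{ℝ^d} ρ(x)^m dx < ∞ and ∬_{ℝ^d×ℝ^d} |x−y|^k ρ(x)ρ(y) dx dy < ∞. -/

import Mathlib

/-!
Fix a base point `x`. Hölder's inequality with exponents `1/m` and `1/(1-m)`, applied to
`ρ^m = (ρ (1 + |x - y|^k))^m (1 + |x - y|^k)^(-m)`, gives
`∫ ρ^m ≤ (1 + ∫ ρ(y) |x - y|^k dy)^m A^(1-m)` with `A = ∫ (1 + |z|^k)^(-m/(1-m)) dz`, and `A` is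
finite exactly when `k m/(1-m) > d`, i.e. `m > d/(d+k)`. Averaging over `x` against `ρ` shows that
some `x` has `∫ ρ(y) |x - y|^k dy ≤ I`, the interaction integral, so `∫ ρ^m ≤ A^(1-m) (1 + I)^m`.
Since `m < 1` this is sublinear in `I`, so the interaction term `χ I / (2k)` dominates the negative
internal energy.
-/

open MeasureTheory Real Set

noncomputable section

/-- A probability density on `ℝ^d`. -/
def IsProbDens {d : ℕ} (ρ : EuclideanSpace ℝ (Fin d) → ℝ) : Prop :=
  Measurable ρ ∧ (∀ x, 0 ≤ ρ x) ∧ Integrable ρ ∧ ∫ x, ρ x = 1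

/-- The (nonnegative) interaction integral `∬ |x−y|^k ρ(x)ρ(y) dx dy`,
taken in the extended nonnegative reals. -/
def interEnergy (d : ℕ) (k : ℝ) (ρ : EuclideanSpace ℝ (Fin d) → ℝ) : ENNReal :=
  ∫⁻ x, ∫⁻ y, ENNReal.ofReal (‖x - y‖ ^ k * ρ x * ρ y)

/-- The free energy `F_χ[ρ] = (1/(m−1)) ∫ ρ^m + (χ/(2k)) ∬ |x−y|^k ρ(x)ρ(y)`
in the homogeneous setting `U(s) = s^m/(m−1)`, `V = 0`, `W(x) = χ|x|^k/k`. -/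
def freeEnergyHom (d : ℕ) (m k χ : ℝ) (ρ : EuclideanSpace ℝ (Fin d) → ℝ) : ℝ :=
  (1 / (m - 1)) * (∫ x, ρ x ^ m) + (χ / (2 * k)) * (interEnergy d k ρ).toReal

/-- Probability densities in `L¹(ℝ^d) ∩ L^m(ℝ^d)`. -/
def AdmissibleLm (d : ℕ) (m : ℝ) (ρ : EuclideanSpace ℝ (Fin d) → ℝ) : Prop :=
  IsProbDens ρ ∧ Integrable fun x => ρ x ^ m

open scoped ENNReal

theorem one_add_rpow_le_two_rpow_mul {r k : ℝ} (hr : 0 ≤ r) (hk : 0 ≤ k) :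
    (1 + r) ^ k ≤ 2 ^ k * (1 + r ^ k) := calc
  (1 + r) ^ k ≤ (2 * max 1 r) ^ k := by rw [two_mul]; gcongr <;> simp
  _ = 2 ^ k * (max 1 r) ^ k := mul_rpow zero_le_two (by positivity)
  _ = 2 ^ k * max 1 (r ^ k) := by rw [rpow_max zero_le_one hr hk, one_rpow]
  _ ≤ 2 ^ k * (1 + r ^ k) := by
    gcongr; exact max_le_add_of_nonneg zero_le_one (by positivity)

theorem exists_mul_rpow_le_mul_add {m : ℝ} (hm0 : 0 < m) (hm1 : m < 1) {b c : ℝ} (hb : 0 < b)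
    (hc : 0 ≤ c) : ∃ K, ∀ u, 0 ≤ u → c * u ^ m ≤ b * u + K := by
  set p := (c * (m / b) ^ m) ^ (1 / (1 - m))
  refine ⟨(1 - m) * p, fun u hu => ?_⟩
  have hp : p ^ (1 - m) = c * (m / b) ^ m := by
    rw [← rpow_mul (by positivity), one_div_mul_cancel (by linarith), rpow_one]
  have hbm : (b / m * u) ^ m * (m / b) ^ m = u ^ m := by
    rw [← mul_rpow (by positivity) (by positivity)]
    field_simp
  calc c * u ^ m = (b / m * u) ^ m * p ^ (1 - m) := by rw [hp, ← hbm]; ring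
    _ ≤ m * (b / m * u) + (1 - m) * p :=
      geom_mean_le_arith_mean2_weighted hm0.le (by linarith) (by positivity) (by positivity)
        (by ring)
    _ = b * u + (1 - m) * p := by field_simp

section Weight

variable {E : Type*} [NormedAddCommGroup E]

theorem rpow_neg_one_add_norm_rpow_le {k s : ℝ} (x : E) (hk : 0 ≤ k) (hs : 0 ≤ s) :
    (1 + ‖x‖ ^ k) ^ (-s) ≤ 2 ^ (k * s) * (1 + ‖x‖) ^ (-(k * s)) := by
  have hpow : (1 + ‖x‖) ^ (k * s) ≤ 2 ^ (k * s) * (1 + ‖x‖ ^ k) ^ s := by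
    rw [rpow_mul (by positivity), rpow_mul zero_le_two, ← mul_rpow (by positivity) (by positivity)]
    gcongr
    exact one_add_rpow_le_two_rpow_mul (norm_nonneg x) hk
  rw [rpow_neg (by positivity), rpow_neg (by positivity), ← div_eq_mul_inv,
    le_div_iff₀ (by positivity), inv_mul_le_iff₀ (by positivity)]
  linarith

variable [NormedSpace ℝ E] [FiniteDimensional ℝ E] [MeasurableSpace E] [BorelSpace E]
  {μ : Measure E} [μ.IsAddHaarMeasure]

open Module in
theorem integrable_rpow_neg_one_add_norm_rpow {k s : ℝ} (hk : 0 < k)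
    (hnr : (finrank ℝ E : ℝ) < k * s) : Integrable (fun x ↦ (1 + ‖x‖ ^ k) ^ (-s)) μ := by
  have hs : 0 ≤ s := nonneg_of_mul_nonneg_right ((finrank ℝ E).cast_nonneg.trans hnr.le) hk
  refine ((integrable_one_add_norm hnr).const_mul (2 ^ (k * s))).mono'
    (Measurable.aestronglyMeasurable (by fun_prop)) (Filter.Eventually.of_forall fun x => ?_)
  rw [norm_of_nonneg (by positivity)]
  exact rpow_neg_one_add_norm_rpow_le x hk.le hs

end Weight

theorem ENNReal.lintegral_rpow_le_lintegral_mul_rpow_mul_lintegral_rpow_neg {α : Type*}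
    [MeasurableSpace α] {μ : Measure α} {m : ℝ} (hm0 : 0 < m) (hm1 : m < 1) {f g : α → ℝ≥0∞}
    (hf : AEMeasurable f μ) (hg : AEMeasurable g μ) (hg0 : ∀ x, g x ≠ 0) (hgtop : ∀ x, g x ≠ ⊤) :
    ∫⁻ x, f x ^ m ∂μ ≤
      (∫⁻ x, f x * g x ∂μ) ^ m * (∫⁻ x, g x ^ (-(m / (1 - m))) ∂μ) ^ (1 - m) := by
  have h1m : 0 < 1 - m := by linarith
  have hpq : (1 / m).HolderConjugate (1 / (1 - m)) :=
    Real.holderConjugate_iff.mpr ⟨by rw [lt_div_iff₀ hm0]; linarith, by simp⟩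
  have hsplit : ∀ x, f x ^ m = (f x * g x) ^ m * g x ^ (-m) := fun x => by
    rw [ENNReal.mul_rpow_of_nonneg _ _ hm0.le, mul_assoc, ← ENNReal.rpow_add _ _ (hg0 x) (hgtop x),
      add_neg_cancel, ENNReal.rpow_zero, mul_one]
  calc ∫⁻ x, f x ^ m ∂μ = ∫⁻ x, ((fun x => (f x * g x) ^ m) * fun x => g x ^ (-m)) x ∂μ :=
        lintegral_congr fun x => hsplit x
    _ ≤ _ := ENNReal.lintegral_mul_le_Lp_mul_Lq μ hpq (by fun_prop) (by fun_prop)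
    _ = _ := by
      simp only [← ENNReal.rpow_mul, one_div_one_div, mul_one_div_cancel hm0.ne', ENNReal.rpow_one]
      congr 3; field_simp

theorem exists_le_lintegral_mul {α : Type*} [MeasurableSpace α] {μ : Measure α}
    {f g : α → ℝ≥0∞} (hf : Measurable f) (hf1 : ∫⁻ x, f x ∂μ = 1) (hg : Measurable g) :
    ∃ x, g x ≤ ∫⁻ y, f y * g y ∂μ := by
  have : IsProbabilityMeasure (μ.withDensity f) := ⟨by simpa using hf1⟩
  simpa only [lintegral_withDensity_eq_lintegral_mul μ hf hg, Pi.mul_apply] using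
    exists_le_lintegral (μ := μ.withDensity f) hg.aemeasurable

namespace IsProbDens

variable {d : ℕ} {ρ : EuclideanSpace ℝ (Fin d) → ℝ}

theorem lintegral_ofReal_eq_one (hρ : IsProbDens ρ) : ∫⁻ x, ENNReal.ofReal (ρ x) = 1 := by
  obtain ⟨-, hpos, hint, hone⟩ := hρ
  rw [← ofReal_integral_eq_lintegral_ofReal hint (ae_of_all _ hpos), hone, ENNReal.ofReal_one]

theorem exists_lintegral_le_interEnergy (hρ : IsProbDens ρ) (k : ℝ) :
    ∃ x, ∫⁻ y, ENNReal.ofReal (ρ y) * ENNReal.ofReal (‖x - y‖ ^ k) ≤ interEnergy d k ρ := by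
  obtain ⟨hmeas, hpos, -, -⟩ := id hρ
  have hJ : Measurable fun x : EuclideanSpace ℝ (Fin d) =>
      ∫⁻ y, ENNReal.ofReal (ρ y) * ENNReal.ofReal (‖x - y‖ ^ k) :=
    Measurable.lintegral_prod_right' (f := fun p : EuclideanSpace ℝ (Fin d) × _ =>
      ENNReal.ofReal (ρ p.2) * ENNReal.ofReal (‖p.1 - p.2‖ ^ k)) (by fun_prop)
  obtain ⟨x, hx⟩ := exists_le_lintegral_mul hmeas.ennreal_ofReal hρ.lintegral_ofReal_eq_one hJ
  refine ⟨x, hx.trans_eq (lintegral_congr fun x' => ?_)⟩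
  rw [← lintegral_const_mul _ (by fun_prop)]
  refine lintegral_congr fun y => ?_
  rw [← mul_assoc, ← ENNReal.ofReal_mul (hpos x'),
    ← ENNReal.ofReal_mul (mul_nonneg (hpos x') (hpos y)), mul_comm, mul_assoc]

theorem lintegral_rpow_le (hρ : IsProbDens ρ) {m : ℝ} (hm0 : 0 < m) (hm1 : m < 1) (k : ℝ) :
    ∫⁻ x, ENNReal.ofReal (ρ x ^ m) ≤ (1 + interEnergy d k ρ) ^ m *
      (∫⁻ z : EuclideanSpace ℝ (Fin d),
        ENNReal.ofReal ((1 + ‖z‖ ^ k) ^ (-(m / (1 - m))))) ^ (1 - m) := by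
  obtain ⟨x, hx⟩ := hρ.exists_lintegral_le_interEnergy k
  obtain ⟨hmeas, hpos, -, -⟩ := id hρ
  set g : EuclideanSpace ℝ (Fin d) → ℝ≥0∞ := fun y => 1 + ENNReal.ofReal (‖x - y‖ ^ k)
  have hmass : ∫⁻ y, ENNReal.ofReal (ρ y) * g y ≤ 1 + interEnergy d k ρ := by
    simp only [g, mul_add, mul_one]
    rw [lintegral_add_left hmeas.ennreal_ofReal, hρ.lintegral_ofReal_eq_one]
    exact add_le_add_right hx 1
  have hweight : ∫⁻ y, g y ^ (-(m / (1 - m))) =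
      ∫⁻ z : EuclideanSpace ℝ (Fin d), ENNReal.ofReal ((1 + ‖z‖ ^ k) ^ (-(m / (1 - m)))) := by
    rw [← lintegral_sub_right_eq_self
      (fun z => ENNReal.ofReal ((1 + ‖z‖ ^ k) ^ (-(m / (1 - m))))) x]
    refine lintegral_congr fun y => ?_
    rw [norm_sub_rev, ← ENNReal.ofReal_rpow_of_pos (by positivity), ENNReal.ofReal_add zero_le_one
      (by positivity), ENNReal.ofReal_one]
  calc ∫⁻ x, ENNReal.ofReal (ρ x ^ m) = ∫⁻ x, ENNReal.ofReal (ρ x) ^ m :=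
        lintegral_congr fun x => (ENNReal.ofReal_rpow_of_nonneg (hpos x) hm0.le).symm
    _ ≤ (∫⁻ y, ENNReal.ofReal (ρ y) * g y) ^ m * (∫⁻ y, g y ^ (-(m / (1 - m)))) ^ (1 - m) :=
      ENNReal.lintegral_rpow_le_lintegral_mul_rpow_mul_lintegral_rpow_neg hm0 hm1 (by fun_prop)
        (by fun_prop) (fun y => by simp [g]) (fun y => by simp [g])
    _ ≤ _ := by rw [hweight]; gcongr

theorem integral_rpow_le (hρ : IsProbDens ρ) {m k : ℝ} (hm0 : 0 < m) (hm1 : m < 1) (hk : 0 < k)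
    (hdk : (d : ℝ) < k * (m / (1 - m))) (hint : Integrable fun x => ρ x ^ m)
    (hI : interEnergy d k ρ ≠ ⊤) :
    ∫ x, ρ x ^ m ≤ (1 + (interEnergy d k ρ).toReal) ^ m *
      (∫ z : EuclideanSpace ℝ (Fin d), (1 + ‖z‖ ^ k) ^ (-(m / (1 - m)))) ^ (1 - m) := by
  have hw : Integrable fun z : EuclideanSpace ℝ (Fin d) => (1 + ‖z‖ ^ k) ^ (-(m / (1 - m))) :=
    integrable_rpow_neg_one_add_norm_rpow hk (by simpa using hdk)
  have hbound := ENNReal.toReal_mono (ENNReal.mul_ne_top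
    (ENNReal.rpow_ne_top_of_nonneg hm0.le (by simp [hI]))
    (ENNReal.rpow_ne_top_of_nonneg (by linarith) hw.lintegral_lt_top.ne))
    (hρ.lintegral_rpow_le hm0 hm1 k)
  rwa [ENNReal.toReal_mul, ← ENNReal.toReal_rpow, ← ENNReal.toReal_rpow,
    ENNReal.toReal_add ENNReal.one_ne_top hI, ENNReal.toReal_one,
    ← integral_eq_lintegral_of_nonneg_ae (ae_of_all _ fun x => rpow_nonneg (hρ.2.1 x) _)
      hint.aestronglyMeasurable,
    ← integral_eq_lintegral_of_nonneg_ae (ae_of_all _ fun z => by positivity)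
      hw.aestronglyMeasurable] at hbound

end IsProbDens

theorem bounded_below_fast_diffusion_dominated_general
    (d : ℕ) (k χ m : ℝ) (hk : 0 < k) (hχ : 0 < χ)
    (hm_lb : (d : ℝ) / (d + k) < m) (hm_ub : m < 1) :
    ∃ C : ℝ, ∀ ρ : EuclideanSpace ℝ (Fin d) → ℝ,
      IsProbDens ρ → (∃ B : ℝ, ∀ x, ρ x ≤ B) →
      Integrable (fun x => ρ x ^ m) → interEnergy d k ρ ≠ ⊤ →
      C ≤ freeEnergyHom d m k χ ρ := by
  have h1m : 0 < 1 - m := by linarith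
  have hm0 : 0 < m := (div_nonneg d.cast_nonneg (by positivity)).trans_lt hm_lb
  have hdk : (d : ℝ) < k * (m / (1 - m)) := by
    rw [div_lt_iff₀ (by positivity)] at hm_lb
    rw [mul_div_assoc', lt_div_iff₀ h1m]
    linarith
  set A := ∫ z : EuclideanSpace ℝ (Fin d), (1 + ‖z‖ ^ k) ^ (-(m / (1 - m)))
  have hA : 0 ≤ A := integral_nonneg fun z => by positivity
  obtain ⟨K, hK⟩ := exists_mul_rpow_le_mul_add hm0 hm_ub (b := χ / (2 * k))
    (c := A ^ (1 - m) / (1 - m)) (by positivity) (by positivity)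
  refine ⟨-(χ / (2 * k)) - K, fun ρ hρ _ hint hI => ?_⟩
  set t := (interEnergy d k ρ).toReal
  have hrpow := hρ.integral_rpow_le hm0 hm_ub hk hdk hint hI
  have hsublin := hK (1 + t) (by positivity)
  have hdiv : (∫ x, ρ x ^ m) / (1 - m) ≤ A ^ (1 - m) / (1 - m) * (1 + t) ^ m := by
    rw [div_mul_eq_mul_div, div_le_div_iff_of_pos_right h1m]
    linarith
  rw [freeEnergyHom, one_div, ← neg_sub 1 m, inv_neg, neg_mul, inv_mul_eq_div]
  linarith

/-- Fast diffusion, diffusion-dominated regime. For `d ≥ 1`,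
`k > 0`, `χ > 0` and `d/(d+k) < m < 1`, the free energy `F_χ` is bounded below
on bounded probability densities with `∫ ρ^m < ∞` and finite interaction
integral. -/
theorem bounded_below_fast_diffusion_dominated
    (d : ℕ) (hd : 1 ≤ d) (k χ m : ℝ) (hk : 0 < k) (hχ : 0 < χ)
    (hm_lb : (d : ℝ) / (d + k) < m) (hm_ub : m < 1) :
    ∃ C : ℝ, ∀ ρ : EuclideanSpace ℝ (Fin d) → ℝ,
      IsProbDens ρ → (∃ B : ℝ, ∀ x, ρ x ≤ B) →
      Integrable (fun x => ρ x ^ m) → interEnergy d k ρ ≠ ⊤ →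
      C ≤ freeEnergyHom d m k χ ρ :=
  bounded_below_fast_diffusion_dominated_general d k χ m hk hχ hm_lb hm_ub
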